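/- For n ≥ 2, 2 ≤ a ≤ n, b with a+b ≥ n+1, b ≤ n-1, 1 ≤ h ≤ n-a, 1 ≤ i ≤ n-b-1, defining for any (c,d) in region II the function F(c,d) = x₁ x_{n-c+2} x_{2n-c-d+1}[1/x₁² + (Σ_{k=0}^{n-c} 1/(x_{n-c-k+1}x_{n-c-k+2}))(Σ_{l=0}^{2n-c-d-1} 1/(x_{2n-c-d-l}x_{2n-c-d-l+1}))] and for (c,d) in region I the function G(c,d) = Σ_{k=0}^{d} x_{n-c-d+1}x_{n-c+2}/(x_{n-c-k+1}x_{n-c-k+2}) (convention x_m = 1 for m ≥ n), the identity F(a,b)·F(a+h,b-h+i) = F(a,b+i)·F(a+h,b-h) + G(a+b+1-n, i-1)·G(a,h-1) holds, where indices of G are taken so that G(a+b+1,i-1) means the region-I formula with first coordinate a+b+1 reduced appropriately, i.e., G(a+b+1,i-1) = Σ_{k=0}^{i-1} x_{n-a-b-i+1}x_{n-a-b+1}/(x_{n-a-b-k}x_{n-a-b-k+1}). -/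
import Mathlib


open Finset

/-- The field ℚ(x₁, …, x_{n-1}). -/
abbrev RF : Type := FractionRing (MvPolynomial ℕ ℚ)

/-- The variables x₁, …, x_{n-1}, with the convention x_m = 1 for m ≥ n. -/
noncomputable def x (n m : ℕ) : RF :=
  if 1 ≤ m ∧ m ≤ n - 1 then algebraMap (MvPolynomial ℕ ℚ) RF (MvPolynomial.X m) else 1

/-- F(c,d): the cluster character value of a region II object (c,d). -/
noncomputable def F (n c d : ℕ) : RF :=
  x n 1 * x n (n - c + 2) * x n (2 * n - c - d + 1) *
    (1 / x n 1 ^ 2 +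
      (∑ k ∈ range (n - c + 1), 1 / (x n (n - c - k + 1) * x n (n - c - k + 2))) *
      (∑ l ∈ range (2 * n - c - d),
        1 / (x n (2 * n - c - d - l) * x n (2 * n - c - d - l + 1))))

/-- G(c,d): the cluster character value of a region I object (c,d). -/
noncomputable def G (n c d : ℕ) : RF :=
  ∑ k ∈ range (d + 1),
    x n (n - c - d + 1) * x n (n - c + 2) / (x n (n - c - k + 1) * x n (n - c - k + 2))

/-- T n j = Σ_{m=1}^{j} 1/(x_m x_{m+1}). -/
noncomputable def T (n j : ℕ) : RF :=
  ∑ k ∈ range j, 1 / (x n (k + 1) * x n (k + 2))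

lemma T_succ (n m : ℕ) : T n (m + 1) = T n m + 1 / (x n (m + 1) * x n (m + 2)) :=
  Finset.sum_range_succ _ _

lemma Gsum (n j s : ℕ) (hs : s ≤ j) :
    ∑ k ∈ range s, 1 / (x n (j - k) * x n (j - k + 1)) = T n j - T n (j - s) := by
  induction s with
  | zero => simp
  | succ s ih =>
    have hs' : s ≤ j := by omega
    rw [Finset.sum_range_succ, ih hs']
    have key : T n (j - s) = T n (j - (s + 1)) + 1 / (x n (j - s) * x n (j - s + 1)) := by
      have h2 : j - (s + 1) + 1 = j - s := by omega
      rw [← h2, T_succ]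
    rw [key]
    ring

lemma Tsum (n j : ℕ) :
    ∑ k ∈ range j, 1 / (x n (j - k) * x n (j - k + 1)) = T n j := by
  rw [Gsum n j j le_rfl, Nat.sub_self]
  simp [T]

lemma FT (n c d : ℕ) :
    F n c d = x n 1 * x n (n - c + 2) * x n (2 * n - c - d + 1) *
      (1 / x n 1 ^ 2 + T n (n - c + 1) * T n (2 * n - c - d)) := by
  rw [F]
  have e1 : ∀ k ∈ range (n - c + 1),
      1 / (x n (n - c - k + 1) * x n (n - c - k + 2))
        = 1 / (x n (n - c + 1 - k) * x n (n - c + 1 - k + 1)) := by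
    intro k hk
    simp only [mem_range] at hk
    rw [show n - c - k + 1 = n - c + 1 - k from by omega,
        show n - c - k + 2 = n - c + 1 - k + 1 from by omega]
  rw [Finset.sum_congr rfl e1, Tsum n (n - c + 1), Tsum n (2 * n - c - d)]

lemma GT (n c d : ℕ) (hd : d ≤ n - c) :
    G n c d = x n (n - c - d + 1) * x n (n - c + 2) *
      (T n (n - c + 1) - T n (n - c - d)) := by
  rw [G]
  have e1 : ∀ k ∈ range (d + 1),
      x n (n - c - d + 1) * x n (n - c + 2) / (x n (n - c - k + 1) * x n (n - c - k + 2))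
        = x n (n - c - d + 1) * x n (n - c + 2) *
            (1 / (x n (n - c + 1 - k) * x n (n - c + 1 - k + 1))) := by
    intro k hk
    simp only [mem_range] at hk
    rw [show n - c - k + 1 = n - c + 1 - k from by omega,
        show n - c - k + 2 = n - c + 1 - k + 1 from by omega]
    ring
  rw [Finset.sum_congr rfl e1, ← Finset.mul_sum, Gsum n (n - c + 1) (d + 1) (by omega),
      show n - c + 1 - (d + 1) = n - c - d from by omega]

/-- The exchange relation of Theorem 4.3, case (a,b) ∈ II with 1 ≤ h ≤ n-a:
F(a,b)·F(a+h,b-h+i) = F(a,b+i)·F(a+h,b-h) + G(a+b+1-n,i-1)·G(a,h-1), where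
G(a+b+1-n,i-1) = Σ_{k=0}^{i-1} x_{2n-a-b-i+1}x_{2n-a-b+1}/(x_{2n-a-b-k}x_{2n-a-b-k+1})
is the region-I formula with first coordinate a+b+1 reduced modulo n. -/
theorem exchange_regionII (n a b h i : ℕ) (hn : 2 ≤ n) (ha : 2 ≤ a) (ha' : a ≤ n)
    (hab : n + 1 ≤ a + b) (hb : b ≤ n - 1) (hh : 1 ≤ h) (hh' : h ≤ n - a)
    (hi : 1 ≤ i) (hi' : i ≤ n - b - 1) :
    F n a b * F n (a + h) (b - h + i) =
      F n a (b + i) * F n (a + h) (b - h) + G n (a + b + 1 - n) (i - 1) * G n a (h - 1) := by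
  have hx1 : x n 1 ≠ 0 := by
    rw [x, if_pos (show 1 ≤ 1 ∧ 1 ≤ n - 1 from by omega)]
    intro hcon
    have h0 : (MvPolynomial.X 1 : MvPolynomial ℕ ℚ) = 0 :=
      IsFractionRing.injective (MvPolynomial ℕ ℚ) RF (by rw [hcon, map_zero])
    exact MvPolynomial.X_ne_zero 1 h0
  rw [FT n a b, FT n (a + h) (b - h + i), FT n a (b + i), FT n (a + h) (b - h),
      GT n (a + b + 1 - n) (i - 1) (by omega), GT n a (h - 1) (by omega)]
  rw [show 2 * n - (a + h) - (b - h + i) = 2 * n - a - b - i from by omega,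
      show 2 * n - a - (b + i) = 2 * n - a - b - i from by omega,
      show n - (a + h) + 2 = n - a - h + 2 from by omega,
      show n - (a + h) + 1 = n - a - h + 1 from by omega,
      show 2 * n - (a + h) - (b - h) = 2 * n - a - b from by omega,
      show n - (a + b + 1 - n) - (i - 1) + 1 = 2 * n - a - b - i + 1 from by omega,
      show n - (a + b + 1 - n) + 2 = 2 * n - a - b + 1 from by omega,
      show n - (a + b + 1 - n) + 1 = 2 * n - a - b from by omega,
      show n - (a + b + 1 - n) - (i - 1) = 2 * n - a - b - i from by omega,
      show n - a - (h - 1) + 1 = n - a - h + 2 from by omega,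
      show n - a - (h - 1) = n - a - h + 1 from by omega]
  set x1 := x n 1 with hx1'
  set X1 := x n (n - a + 2)
  set X2 := x n (n - a - h + 2)
  set X3 := x n (2 * n - a - b + 1)
  set X4 := x n (2 * n - a - b - i + 1)
  set A := T n (n - a + 1)
  set B := T n (n - a - h + 1)
  set C := T n (2 * n - a - b)
  set D := T n (2 * n - a - b - i)
  field_simp
  ring
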